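/- arXiv:2011.13072 — 3 statements merged into one kernel-verified Lean document; each statement's English description precedes it below -/
import Mathlib

section
/- There exists a unique formal power series F ∈ ℂ[[t]] with constant coefficient 1 satisfying F(t·(1+2t)⁻¹) = F(t)·(1 − t²) in ℂ[[t]], where F(t·(1+2t)⁻¹) denotes substitution of the power series t·(1+2t)⁻¹ (which has zero constant term, so substitution is well defined) into F. -/
/-!
Write `g = t·u` with `u(0) = 1`. The coefficient of `tⁿ` in `F(g)` is
`Fₙ + (n-1)·u₁·Fₙ₋₁ + (terms in F₀, …, Fₙ₋₂)`, while that of `F·(1-t²)` is `Fₙ - Fₙ₋₂`.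
So the equation holds automatically in degrees 0 and 1, and in degree `m+2` it determines
`Fₘ₊₁` from `F₀, …, Fₘ` as soon as `u₁ ≠ 0`; for `u = (1+2t)⁻¹` we have `u₁ = -2`.
With `F₀ = 1` this is a recursion, which has exactly one solution.
-/

open PowerSeries

/-- Substitution of a power series `g` (with zero constant coefficient) into a power
series `F`: the `n`-th coefficient of `F(g)` is `∑_{k ≤ n} (coeff k F) · coeff n (g^k)`.
(When the constant coefficient of `g` is zero, `coeff n (g^k) = 0` for `k > n`, so this
is the usual substitution.) -/
noncomputable def psSubst (g F : PowerSeries ℂ) : PowerSeries ℂ :=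
  PowerSeries.mk fun n =>
    ∑ k ∈ Finset.range (n + 1), PowerSeries.coeff k F * PowerSeries.coeff n (g ^ k)

section CausalRecursion

variable {α : Type*} (a₀ : α) (step : ℕ → (ℕ → α) → α)

def recursionOp (f : ℕ → α) : ℕ → α
  | 0 => a₀
  | m + 1 => step m f

theorem recursionOp_eq_self_iff {f : ℕ → α} :
    recursionOp a₀ step f = f ↔ f 0 = a₀ ∧ ∀ m, f (m + 1) = step m f := by
  refine ⟨fun h => ⟨(congrFun h 0).symm, fun m => (congrFun h (m + 1)).symm⟩, ?_⟩
  rintro ⟨h0, hsucc⟩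
  funext n
  cases n <;> simp [recursionOp, h0, hsucc]

variable {a₀ step} (hstep : ∀ m f g, (∀ k ≤ m, f k = g k) → step m f = step m g)
include hstep

theorem iterate_recursionOp_apply_eq (N : ℕ) (f g : ℕ → α) {k : ℕ} (hk : k < N) :
    (recursionOp a₀ step)^[N] f k = (recursionOp a₀ step)^[N] g k := by
  induction N generalizing k with
  | zero => omega
  | succ N ih =>
    rw [Function.iterate_succ_apply', Function.iterate_succ_apply']
    cases k with
    | zero => rfl
    | succ m => exact hstep m _ _ fun k hk' => ih (by omega)

theorem existsUnique_recursion : ∃! f : ℕ → α, f 0 = a₀ ∧ ∀ m, f (m + 1) = step m f := by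
  set G := recursionOp a₀ step
  simp only [← recursionOp_eq_self_iff]
  -- The `n`-th term of the solution is already correct after `n + 1` iterations.
  let f : ℕ → α := fun n => G^[n + 1] (fun _ => a₀) n
  have hf {m k : ℕ} (hk : k ≤ m) : f k = G^[m + 1] (fun _ => a₀) k := by
    rw [show m + 1 = k + 1 + (m - k) by omega, Function.iterate_add_apply]
    exact iterate_recursionOp_apply_eq hstep _ _ _ (Nat.lt_succ_self k)
  refine ⟨f, ?_, fun g hg => ?_⟩
  · funext n
    cases n with
    | zero => rfl
    | succ m =>
      change step m f = G^[m + 2] _ (m + 1)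
      rw [Function.iterate_succ_apply']
      exact hstep m _ _ fun k hk => hf hk
  · funext k
    rw [← Function.iterate_fixed hg (k + 1)]
    exact iterate_recursionOp_apply_eq hstep _ _ _ (Nat.lt_succ_self k)

end CausalRecursion

section XMulPow

variable {R : Type*} [CommSemiring R]

theorem coeff_X_mul_pow (u : R⟦X⟧) (n k : ℕ) :
    coeff n ((X * u) ^ k) = if k ≤ n then coeff (n - k) (u ^ k) else 0 := by
  rw [mul_pow, mul_comm, coeff_mul_X_pow']

variable {u : R⟦X⟧} (hu : constantCoeff u = 1)
include hu

theorem coeff_X_mul_pow_self (n : ℕ) : coeff n ((X * u) ^ n) = 1 := by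
  rw [coeff_X_mul_pow, if_pos le_rfl, Nat.sub_self, coeff_zero_eq_constantCoeff, map_pow, hu,
    one_pow]

theorem coeff_succ_X_mul_pow (k : ℕ) : coeff (k + 1) ((X * u) ^ k) = k * coeff 1 u := by
  rw [coeff_X_mul_pow, if_pos k.le_succ, Nat.add_sub_cancel_left, coeff_one_pow, hu, one_pow,
    mul_one]

end XMulPow

section Substitution

variable {u : ℂ⟦X⟧} (hu : constantCoeff u = 1)
include hu

theorem coeff_psSubst_X_mul (F : ℂ⟦X⟧) (n : ℕ) :
    coeff n (psSubst (X * u) F)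
      = ∑ k ∈ Finset.range n, coeff k F * coeff n ((X * u) ^ k) + coeff n F := by
  rw [psSubst, coeff_mk, Finset.sum_range_succ, coeff_X_mul_pow_self hu, mul_one]

theorem coeff_add_two_psSubst_X_mul (F : ℂ⟦X⟧) (m : ℕ) :
    coeff (m + 2) (psSubst (X * u) F)
      = ∑ k ∈ Finset.range (m + 1), coeff k F * coeff (m + 2) ((X * u) ^ k)
        + (m + 1) * coeff 1 u * coeff (m + 1) F + coeff (m + 2) F := by
  rw [coeff_psSubst_X_mul hu, Finset.sum_range_succ, coeff_succ_X_mul_pow hu]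
  push_cast
  ring

theorem psSubst_X_mul_eq_mul_one_sub_X_sq_iff (F : ℂ⟦X⟧) :
    psSubst (X * u) F = F * (1 - X ^ 2) ↔
      ∀ m : ℕ, (m + 1) * coeff 1 u * coeff (m + 1) F
        = -(coeff m F + ∑ k ∈ Finset.range (m + 1), coeff k F * coeff (m + 2) ((X * u) ^ k)) := by
  have coeff_rhs (n : ℕ) :
      coeff n (F * (1 - X ^ 2)) = coeff n F - if 2 ≤ n then coeff (n - 2) F else 0 := by
    rw [mul_sub, mul_one, map_sub, coeff_mul_X_pow']
  rw [PowerSeries.ext_iff]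
  refine ⟨fun h m => ?_, fun h n => ?_⟩
  · have := h (m + 2)
    rw [coeff_add_two_psSubst_X_mul hu, coeff_rhs, if_pos (by omega), Nat.add_sub_cancel] at this
    linear_combination this
  · match n with
    | 0 => simp [coeff_psSubst_X_mul hu, coeff_rhs]
    | 1 => simp [coeff_psSubst_X_mul hu, coeff_rhs]
    | m + 2 =>
      rw [coeff_add_two_psSubst_X_mul hu, coeff_rhs, if_pos (by omega), Nat.add_sub_cancel]
      linear_combination h m

theorem existsUnique_psSubst_X_mul_eq (hu₁ : coeff 1 u ≠ 0) :
    ∃! F : ℂ⟦X⟧, constantCoeff F = 1 ∧ psSubst (X * u) F = F * (1 - X ^ 2) := by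
  have mk_bijective : Function.Bijective (mk : (ℕ → ℂ) → ℂ⟦X⟧) :=
    ⟨fun f g h => funext fun n => by simpa using congrArg (coeff n) h,
      fun F => ⟨fun n => coeff n F, by ext; simp⟩⟩
  rw [mk_bijective.existsUnique_iff]
  simp only [psSubst_X_mul_eq_mul_one_sub_X_sq_iff hu, ← coeff_zero_eq_constantCoeff_apply,
    coeff_mk]
  refine (existsUnique_congr fun f => and_congr_right' <| forall_congr' fun m => ?_).mpr
    (existsUnique_recursion (step := fun m f =>
        -(f m + ∑ k ∈ Finset.range (m + 1), f k * coeff (m + 2) ((X * u) ^ k))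
          / ((m + 1) * coeff 1 u))
      fun m f g hfg => ?_)
  · rw [eq_div_iff (mul_ne_zero m.cast_add_one_ne_zero hu₁), mul_comm]
  · rw [hfg m le_rfl, Finset.sum_congr rfl fun k hk => by
      rw [hfg k (Nat.lt_succ_iff.mp (Finset.mem_range.mp hk))]]

end Substitution

theorem coeff_one_inv_one_add_two_mul_X : coeff 1 ((1 + 2 * X : ℂ⟦X⟧)⁻¹) = -2 := by
  have h := congrArg (coeff 1) (PowerSeries.mul_inv_cancel (1 + 2 * X : ℂ⟦X⟧) (by simp))
  rw [coeff_one_mul, constantCoeff_inv] at h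
  simpa [map_ofNat, add_eq_zero_iff_eq_neg'] using h

/-- There exists a unique `F ∈ ℂ[[t]]` with constant coefficient `1` such that
`F(t·(1+2t)⁻¹) = F(t)·(1 − t²)`. -/
theorem exists_unique_normalizing_series :
    ∃! F : PowerSeries ℂ,
      PowerSeries.constantCoeff F = 1 ∧
        psSubst (PowerSeries.X * (1 + 2 * PowerSeries.X)⁻¹) F
          = F * (1 - PowerSeries.X ^ 2) :=
  existsUnique_psSubst_X_mul_eq (by simp [constantCoeff_inv])
    (by rw [coeff_one_inv_one_add_two_mul_X]; norm_num)
end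

section
/- Let F ∈ ℂ[[t]] be the unique formal power series with constant coefficient 1 satisfying F(t·(1+2t)⁻¹) = F(t)·(1 − t²). Then F(t)·F(−t)·(1 − t²) = 1 in ℂ[[t]], where F(−t) denotes substitution of −t into F. -/
/-!
Write `σ(t) = t / (1 + 2t)`. The map `t ↦ -σ(t)` is an involution, so substituting `-σ` into
`F(σ) = F · (1 - t²)` gives `F(-t) = F(-σ) · (1 - σ²)`, and therefore
`G = F(t) F(-t) (1 - t²)` satisfies `G(σ) = G`. Since `σ = t - 2t² + O(t³)`, comparing the
coefficients of `t ^ (n + 1)` in `G(σ) = G` gives `-2n Gₙ = 0` inductively, so `G = G(0) = 1`.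
-/

open PowerSeries

namespace PowerSeries

section CommRing

variable {R : Type*} [CommRing R]

theorem coeff_pow_of_constantCoeff_eq_zero {g : R⟦X⟧} (hg : constantCoeff g = 0) {n k : ℕ}
    (h : n < k) : coeff n (g ^ k) = 0 :=
  coeff_of_lt_order _ ((Nat.cast_lt.mpr h).trans_le (le_order_pow_of_constantCoeff_eq_zero k hg))

theorem coeff_subst_eq_sum_range {g : R⟦X⟧} (hg : constantCoeff g = 0) (f : R⟦X⟧) (n : ℕ) :
    coeff n (subst g f) = ∑ k ∈ Finset.range (n + 1), coeff k f * coeff n (g ^ k) := by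
  rw [coeff_subst' (HasSubst.of_constantCoeff_zero' hg)]
  refine finsum_eq_sum_of_support_subset _ fun k hk => ?_
  by_contra hkn
  rw [Finset.coe_range, Set.mem_Iio, not_lt] at hkn
  exact hk (by simp only [coeff_pow_of_constantCoeff_eq_zero hg hkn, smul_zero])

theorem subst_neg_X {a : R⟦X⟧} (ha : HasSubst a) : subst a (-X : R⟦X⟧) = -a := by
  rw [← coe_substAlgHom ha, map_neg, coe_substAlgHom, subst_X ha]

theorem subst_one_sub_X_sq {a : R⟦X⟧} (ha : HasSubst a) :
    subst a (1 - X ^ 2 : R⟦X⟧) = 1 - a ^ 2 := by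
  rw [← coe_substAlgHom ha, map_sub, map_one, map_pow, coe_substAlgHom, subst_X ha]

theorem coeff_self_X_mul_pow {u : R⟦X⟧} (hu₀ : constantCoeff u = 1) (k : ℕ) :
    coeff k ((X * u) ^ k) = 1 := by
  rw [mul_pow, coeff_X_pow_mul', if_pos le_rfl, Nat.sub_self, coeff_zero_eq_constantCoeff,
    map_pow, hu₀, one_pow]

theorem coeff_succ_X_mul_pow {u : R⟦X⟧} (hu₀ : constantCoeff u = 1) (k : ℕ) :
    coeff (k + 1) ((X * u) ^ k) = k * coeff 1 u := by
  rw [mul_pow, add_comm, coeff_X_pow_mul, coeff_one_pow, hu₀, one_pow, mul_one]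

theorem coeff_eq_zero_of_subst_X_mul_eq_self [NoZeroDivisors R] [CharZero R] {u G : R⟦X⟧}
    (hu₀ : constantCoeff u = 1) (hu₁ : coeff 1 u ≠ 0) (hG : subst (X * u) G = G) {n : ℕ}
    (hn : n ≠ 0) : coeff n G = 0 := by
  have hσ : constantCoeff (X * u) = 0 := by simp
  induction n using Nat.strong_induction_on with
  | _ n ih =>
    have hcoeff := congrArg (coeff (n + 1)) hG
    rw [coeff_subst_eq_sum_range hσ, Finset.sum_range_succ, Finset.sum_range_succ,
      coeff_self_X_mul_pow hu₀, coeff_succ_X_mul_pow hu₀] at hcoeff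
    have hlower : ∑ k ∈ Finset.range n, coeff k G * coeff (n + 1) ((X * u) ^ k) = 0 := by
      refine Finset.sum_eq_zero fun k hk => ?_
      rcases eq_or_ne k 0 with rfl | hk₀
      · simp
      · rw [ih k (Finset.mem_range.mp hk) hk₀, zero_mul]
    have : coeff n G * ((n : R) * coeff 1 u) = 0 := by linear_combination hcoeff - hlower
    simpa [hn, hu₁] using this

theorem eq_C_of_subst_X_mul_eq_self [NoZeroDivisors R] [CharZero R] {u G : R⟦X⟧}
    (hu₀ : constantCoeff u = 1) (hu₁ : coeff 1 u ≠ 0) (hG : subst (X * u) G = G) :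
    G = C (constantCoeff G) := by
  ext (_ | n)
  · simp
  · rw [coeff_C, if_neg n.succ_ne_zero,
      coeff_eq_zero_of_subst_X_mul_eq_self hu₀ hu₁ hG n.succ_ne_zero]

theorem subst_mul_subst_neg_X_mul_eq_self {σ F E : R⟦X⟧} (hσ : constantCoeff σ = 0)
    (hinv : subst (-σ) σ = -X) (hE : subst (-X : R⟦X⟧) E = E) (hF : subst σ F = F * E) :
    subst σ (F * subst (-X : R⟦X⟧) F * E) = F * subst (-X : R⟦X⟧) F * E := by
  have hσ' : HasSubst σ := .of_constantCoeff_zero' hσ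
  have hnegσ : HasSubst (-σ) := .of_constantCoeff_zero' (by simp [hσ])
  have subst_subst_neg_X (f : R⟦X⟧) : subst σ (subst (-X : R⟦X⟧) f) = subst (-σ) f := by
    rw [subst_comp_subst_apply (.of_constantCoeff_zero' (by simp)) hσ', subst_neg_X hσ']
  have hF_neg : subst (-X : R⟦X⟧) F = subst (-σ) F * subst (-σ) E := by
    rw [← hinv, ← subst_comp_subst_apply hσ' hnegσ, hF, subst_mul hnegσ]
  have hE_σ : subst σ E = subst (-σ) E := by
    conv_lhs => rw [← hE]
    exact subst_subst_neg_X E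
  rw [subst_mul hσ', subst_mul hσ', hF, subst_subst_neg_X, hE_σ, hF_neg]
  ring

end CommRing

section Field

variable {k : Type*} [Field k]

noncomputable def mobius (c : k) : k⟦X⟧ := X * (1 + C c * X)⁻¹

theorem constantCoeff_inv_one_add_C_mul_X (c : k) : constantCoeff (1 + C c * X)⁻¹ = 1 := by
  simp

theorem coeff_one_inv_one_add_C_mul_X (c : k) : coeff 1 (1 + C c * X)⁻¹ = -c := by
  have h := congrArg (coeff 1) (PowerSeries.mul_inv_cancel (1 + C c * X) (by simp))
  rw [coeff_one_mul, constantCoeff_inv_one_add_C_mul_X] at h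
  simpa [eq_neg_iff_add_eq_zero, add_comm] using h

theorem constantCoeff_mobius (c : k) : constantCoeff (mobius c) = 0 := by
  simp [mobius]

theorem mobius_mul_one_add_C_mul_X (c : k) : mobius c * (1 + C c * X) = X := by
  rw [mobius, mul_assoc, PowerSeries.inv_mul_cancel _ (by simp), mul_one]

theorem subst_neg_mobius_mobius (c : k) : subst (-mobius c) (mobius c) = -X := by
  have ha : HasSubst (-mobius c) := .of_constantCoeff_zero' (by simp [constantCoeff_mobius])
  have h := congrArg (subst (-mobius c)) (mobius_mul_one_add_C_mul_X c)
  have h_denom : subst (-mobius c) (1 + C c * X) = 1 + C c * -mobius c := by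
    rw [← coe_substAlgHom ha, map_add, map_one, map_mul, coe_substAlgHom, subst_X ha, subst_C]
    rfl
  have h_ne : 1 + C c * -mobius c ≠ 0 := fun h0 => by
    simpa [constantCoeff_mobius] using congrArg constantCoeff h0
  rw [subst_mul ha, subst_X ha, h_denom] at h
  refine mul_right_cancel₀ h_ne (h.trans ?_)
  linear_combination -(mobius_mul_one_add_C_mul_X c)

end Field

end PowerSeries

theorem psSubst_eq_subst {g : ℂ⟦X⟧} (hg : constantCoeff g = 0) (F : ℂ⟦X⟧) :
    psSubst g F = subst g F := by
  ext n
  rw [psSubst, coeff_mk, coeff_subst_eq_sum_range hg]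

/-- If `F ∈ ℂ[[t]]` has constant coefficient `1` and satisfies
`F(t·(1+2t)⁻¹) = F(t)·(1 − t²)`, then `F(t)·F(−t)·(1 − t²) = 1`. -/
theorem unitarity_of_normalizing_series (F : PowerSeries ℂ)
    (hF1 : PowerSeries.constantCoeff F = 1)
    (hF2 : psSubst (PowerSeries.X * (1 + 2 * PowerSeries.X)⁻¹) F
      = F * (1 - PowerSeries.X ^ 2)) :
    F * psSubst (-PowerSeries.X) F * (1 - PowerSeries.X ^ 2) = 1 := by
  have hσ : (X * (1 + 2 * X)⁻¹ : ℂ⟦X⟧) = mobius 2 := by rw [mobius, map_ofNat]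
  have hE : subst (-X : ℂ⟦X⟧) (1 - X ^ 2 : ℂ⟦X⟧) = 1 - X ^ 2 := by
    rw [subst_one_sub_X_sq (.of_constantCoeff_zero' (by simp)), neg_sq]
  rw [hσ, psSubst_eq_subst (constantCoeff_mobius 2)] at hF2
  rw [psSubst_eq_subst (by simp)]
  have hG := subst_mul_subst_neg_X_mul_eq_self (constantCoeff_mobius 2)
    (subst_neg_mobius_mobius 2) hE hF2
  rw [mobius] at hG
  rw [eq_C_of_subst_X_mul_eq_self (constantCoeff_inv_one_add_C_mul_X 2)
    (by rw [coeff_one_inv_one_add_C_mul_X]; norm_num) hG]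
  have h_neg : constantCoeff (subst (-X : ℂ⟦X⟧) F) = 1 := by
    rw [← coeff_zero_eq_constantCoeff_apply, coeff_subst_eq_sum_range (by simp)]
    simp [hF1]
  simp [hF1, h_neg]
end

section
/- Let l ≥ 1 be an integer and let α_1, …, α_l, c_1, …, c_l ∈ ℂ satisfy Σ_{i=1}^l α_i·c_i^k = δ_{k, l−1}·(l−1)! for every k with 0 ≤ k ≤ l−1 (with the convention c^0 = 1, including 0^0 = 1). Then for every polynomial F ∈ ℂ[X], in the polynomial ring ℂ[X, Y] the element Σ_{i=1}^l α_i · F(X + c_i·Y) is divisible by Y^{l−1}; more precisely, there exists H ∈ ℂ[X, Y] such that Σ_{i=1}^l α_i · F(X + c_i·Y) = Y^{l−1} · F^{(l−1)}(X) + Y^l · H, where F^{(l−1)} denotes the (l−1)-st formal derivative of F and F(X + c·Y) denotes the image of F under the substitution X ↦ X + c·Y. -/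
/-!
Expanding in Hasse derivatives, `F(X + cY) = ∑ₖ (D⁽ᵏ⁾F)(X) cᵏ Yᵏ`, so `∑ᵢ αᵢ F(X + cᵢY)` equals
`∑ₖ (∑ᵢ αᵢ cᵢᵏ) (D⁽ᵏ⁾F)(X) Yᵏ`. The moment conditions kill the terms `k < l - 1`, the term
`k = l - 1` is `Y^(l-1) F^(l-1)(X)` because `(l-1)! • D⁽ˡ⁻¹⁾` is the `(l-1)`-st derivative, and all
remaining terms are divisible by `Yˡ`.
-/

open Finset

namespace Polynomial

open Polynomial

theorem hasseDeriv_map {R S : Type*} [Semiring R] [Semiring S] (f : R →+* S) (k : ℕ) (p : R[X]) :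
    hasseDeriv k (p.map f) = (hasseDeriv k p).map f := by
  ext n
  simp [hasseDeriv_coeff, coeff_map]

variable {R A ι : Type*} [CommSemiring R] [CommSemiring A] [Algebra R A]

theorem aeval_add_eq_sum_hasseDeriv (F : R[X]) (x y : A) {N : ℕ} (hN : F.natDegree < N) :
    aeval (x + y) F = ∑ k ∈ range N, aeval x (hasseDeriv k F) * y ^ k := by
  have hdeg : (taylor x (F.map (algebraMap R A))).natDegree < N :=
    (natDegree_taylor _ _).trans_le natDegree_map_le |>.trans_lt hN
  rw [aeval_def, eval₂_eq_eval_map, add_comm, ← taylor_eval, eval_eq_sum_range' hdeg]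
  simp only [taylor_coeff, hasseDeriv_map, eval_map_algebraMap]

theorem sum_smul_aeval_add_smul_eq_sum_hasseDeriv (s : Finset ι) (α c : ι → R) (F : R[X])
    (x y : A) {N : ℕ} (hN : F.natDegree < N) :
    ∑ i ∈ s, α i • aeval (x + c i • y) F
      = ∑ k ∈ range N, (∑ i ∈ s, α i * c i ^ k) • (aeval x (hasseDeriv k F) * y ^ k) := by
  simp only [aeval_add_eq_sum_hasseDeriv F x (hN := hN), _root_.smul_pow, mul_smul_comm,
    smul_sum, sum_smul, mul_smul]
  exact sum_comm

theorem exists_sum_smul_aeval_add_smul_eq (s : Finset ι) (α c : ι → R) (m : ℕ)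
    (h : ∀ k ≤ m, ∑ i ∈ s, α i * c i ^ k = if k = m then (m.factorial : R) else 0)
    (F : R[X]) (x y : A) :
    ∃ H : A, ∑ i ∈ s, α i • aeval (x + c i • y) F
      = y ^ m * aeval x (derivative^[m] F) + y ^ (m + 1) * H := by
  set N := max (F.natDegree + 1) (m + 1)
  have hlow : ∑ k ∈ range (m + 1), (∑ i ∈ s, α i * c i ^ k) • (aeval x (hasseDeriv k F) * y ^ k)
      = y ^ m * aeval x (derivative^[m] F) := by
    rw [sum_eq_single_of_mem m (self_mem_range_succ m) fun k hk hkm => by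
      rw [h k (mem_range_succ_iff.mp hk), if_neg hkm, zero_smul], h m le_rfl, if_pos rfl,
      ← factorial_smul_hasseDeriv]
    rw [LinearMap.smul_apply, map_nsmul, Nat.cast_smul_eq_nsmul, mul_smul_comm, mul_comm]
  obtain ⟨H, hH⟩ : y ^ (m + 1) ∣
      ∑ k ∈ Ico (m + 1) N, (∑ i ∈ s, α i * c i ^ k) • (aeval x (hasseDeriv k F) * y ^ k) :=
    dvd_sum fun k hk => by
      rw [← smul_mul_assoc]
      exact (pow_dvd_pow y (mem_Ico.mp hk).1).mul_left _
  refine ⟨H, ?_⟩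
  rw [sum_smul_aeval_add_smul_eq_sum_hasseDeriv s α c F x y
      (lt_max_of_lt_left (Nat.lt_succ_self _)), ← sum_range_add_sum_Ico _ (le_max_right _ _),
    hlow, hH]

end Polynomial

open MvPolynomial

/-- If `α_1, …, α_l, c_1, …, c_l ∈ ℂ` satisfy the Vandermonde system
`∑_i α_i·c_i^k = δ_{k, l−1}·(l−1)!` for `0 ≤ k ≤ l−1`, then for every polynomial
`F ∈ ℂ[X]`, in `ℂ[X, Y]` one has
`∑_i α_i·F(X + c_i·Y) = Y^{l−1}·F^{(l−1)}(X) + Y^l·H` for some `H ∈ ℂ[X, Y]`. -/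
theorem taylor_vanishing_of_vandermonde (l : ℕ) (hl : 1 ≤ l)
    (α c : Fin l → ℂ)
    (h : ∀ k : ℕ, k < l →
      ∑ i, α i * c i ^ k = if k = l - 1 then ((l - 1).factorial : ℂ) else 0)
    (F : Polynomial ℂ) :
    ∃ H : MvPolynomial (Fin 2) ℂ,
      ∑ i, MvPolynomial.C (α i) *
          Polynomial.aeval
            (MvPolynomial.X 0 + MvPolynomial.C (c i) * MvPolynomial.X 1 :
              MvPolynomial (Fin 2) ℂ) F
        = (MvPolynomial.X 1 : MvPolynomial (Fin 2) ℂ) ^ (l - 1) *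
              Polynomial.aeval (MvPolynomial.X 0 : MvPolynomial (Fin 2) ℂ)
                (Polynomial.derivative^[l - 1] F)
            + (MvPolynomial.X 1 : MvPolynomial (Fin 2) ℂ) ^ l * H := by
  obtain ⟨H, hH⟩ := Polynomial.exists_sum_smul_aeval_add_smul_eq univ α c (l - 1)
    (fun k hk => h k (by omega)) F (X 0 : MvPolynomial (Fin 2) ℂ) (X 1)
  refine ⟨H, ?_⟩
  simp only [C_mul']
  rwa [Nat.sub_add_cancel hl] at hH
end
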